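/- The relative suffix distance RSD is a metric on the set of finite strings over an alphabet Σ (satisfying non-negativity, identity of indiscernibles, symmetry, and the triangle inequality), and it takes values in [0, 1]. -/

import Mathlib

variable {α : Type*}

/-- Insertion-deletion edit distance. -/
def ED [DecidableEq α] : List α → List α → ℕ
  | [], ys => ys.length
  | _ :: xs, [] => xs.length + 1
  | x :: xs, y :: ys =>
    if x = y then ED xs ys
    else 1 + min (ED (x :: xs) ys) (ED xs (y :: ys))
termination_by xs ys => xs.length + ys.length
decreasing_by all_goals (simp; try omega)

/-- Length of longest common subsequence. -/
def LCSlen [DecidableEq α] : List α → List α → ℕ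
  | [], _ => 0
  | _ :: _, [] => 0
  | x :: xs, y :: ys =>
    if x = y then 1 + LCSlen xs ys
    else max (LCSlen (x :: xs) ys) (LCSlen xs (y :: ys))
termination_by xs ys => xs.length + ys.length
decreasing_by all_goals (simp; try omega)

/-- substring S[i, j) of an (infinite) string -/
def sub (S : ℕ → α) (i j : ℕ) : List α := (List.range' i (j - i)).map S

def IsSyncString [DecidableEq α] (ε : ℝ) (n : ℕ) (S : ℕ → α) : Prop :=
  ∀ i j k : ℕ, i < j → j < k → k ≤ n →
    (1 - ε) * ((k : ℝ) - i) < ED (sub S i j) (sub S j k)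

def ReachableR (c y : List α) (D G : ℝ) : Prop :=
  ∃ z : List α, z.Sublist c ∧ z.Sublist y ∧
    (c.length : ℝ) - z.length ≤ D ∧ (y.length : ℝ) - z.length ≤ G

noncomputable def RSD {σ : Type*} [DecidableEq σ] (S T : List σ) : ℝ :=
  ⨆ k : ℕ, (ED (S.drop (S.length - (k + 1))) (T.drop (T.length - (k + 1))) : ℝ) /
      (2 * (k + 1))

/-!
Edit distance and longest common subsequences are tied by `ED x y = |x| + |y| - 2 LCS(x, y)`.
For the triangle inequality, a longest common subsequence of `x, y` and one of `y, z` both sit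
inside `y`, so they share a subsequence of length at least their total length minus `|y|`; that
subsequence is common to `x` and `z`. Every term of the supremum defining `RSD` is therefore a
pseudometric in `[0, 1]`, and the term with `k ≥ |S| + |T|` compares the whole strings.
-/

section EditDistance

variable [DecidableEq α]

theorem ED_add_two_mul_LCSlen (xs ys : List α) :
    ED xs ys + 2 * LCSlen xs ys = xs.length + ys.length := by
  induction xs, ys using ED.induct with
  | case1 ys => simp [ED, LCSlen]
  | case2 x xs => simp [ED, LCSlen]
  | case3 xs y ys ih =>
    rw [ED, LCSlen, if_pos rfl, if_pos rfl]
    simp only [List.length_cons]; omega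
  | case4 x xs y ys h ih1 ih2 =>
    rw [ED, LCSlen, if_neg h, if_neg h]
    simp only [List.length_cons] at *; omega

theorem ED_le_length_add_length (xs ys : List α) : ED xs ys ≤ xs.length + ys.length := by
  have := ED_add_two_mul_LCSlen xs ys; omega

theorem ED_comm (xs ys : List α) : ED xs ys = ED ys xs := by
  induction xs, ys using ED.induct with
  | case1 ys => cases ys <;> simp [ED]
  | case2 x xs => simp [ED]
  | case3 xs y ys ih => rw [ED, ED, if_pos rfl, if_pos rfl, ih]
  | case4 x xs y ys h ih1 ih2 =>
    rw [ED, ED, if_neg h, if_neg (Ne.symm h), ih1, ih2, min_comm]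

theorem ED_eq_zero_iff {xs ys : List α} : ED xs ys = 0 ↔ xs = ys := by
  refine ⟨fun h => ?_, ?_⟩
  · induction xs, ys using ED.induct with
    | case1 ys => simpa [ED, eq_comm] using h
    | case2 x xs => simp [ED] at h
    | case3 xs y ys ih => rw [ED, if_pos rfl] at h; rw [ih h]
    | case4 x xs y ys hne ih1 ih2 => rw [ED, if_neg hne] at h; omega
  · rintro rfl
    induction xs with
    | nil => simp [ED]
    | cons x xs ih => rw [ED, if_pos rfl]; exact ih

theorem exists_sublist_sublist_length_eq_LCSlen (xs ys : List α) :
    ∃ z : List α, z.Sublist xs ∧ z.Sublist ys ∧ z.length = LCSlen xs ys := by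
  induction xs, ys using ED.induct with
  | case1 ys => exact ⟨[], by simp [LCSlen]⟩
  | case2 x xs => exact ⟨[], by simp [LCSlen]⟩
  | case3 xs y ys ih =>
    obtain ⟨z, hxs, hys, hz⟩ := ih
    exact ⟨y :: z, hxs.cons_cons y, hys.cons_cons y,
      by rw [LCSlen, if_pos rfl, List.length_cons, hz, add_comm]⟩
  | case4 x xs y ys hne ih1 ih2 =>
    obtain ⟨z₁, hxs₁, hys₁, hz₁⟩ := ih1
    obtain ⟨z₂, hxs₂, hys₂, hz₂⟩ := ih2
    rw [LCSlen, if_neg hne]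
    rcases le_total (LCSlen (x :: xs) ys) (LCSlen xs (y :: ys)) with hle | hle
    · exact ⟨z₂, hxs₂.cons x, hys₂, by rw [max_eq_right hle, hz₂]⟩
    · exact ⟨z₁, hxs₁, hys₁.cons y, by rw [max_eq_left hle, hz₁]⟩

theorem length_le_LCSlen {z xs ys : List α} (hxs : z.Sublist xs) (hys : z.Sublist ys) :
    z.length ≤ LCSlen xs ys := by
  induction xs, ys using ED.induct generalizing z with
  | case1 ys => simp [List.sublist_nil.mp hxs, LCSlen]
  | case2 x xs => simp [List.sublist_nil.mp hys, LCSlen]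
  | case3 xs y ys ih =>
    have := ih hxs.tail hys.tail
    rw [LCSlen, if_pos rfl]
    cases z <;> simp only [List.length_nil, List.length_cons, List.tail_cons] at * <;> omega
  | case4 x xs y ys hne ih1 ih2 =>
    rw [LCSlen, if_neg hne]
    cases hxs with
    | cons _ hxs' => exact (ih2 hxs' hys).trans (le_max_right _ _)
    | cons_cons _ hxs' =>
      cases hys with
      | cons _ hys' => exact (ih1 (hxs'.cons_cons x) hys').trans (le_max_left _ _)
      | cons_cons _ hys' => exact absurd rfl hne

end EditDistance

theorem exists_common_sublist_of_sublist {z₁ z₂ y : List α} (h₁ : z₁.Sublist y)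
    (h₂ : z₂.Sublist y) :
    ∃ w : List α, w.Sublist z₁ ∧ w.Sublist z₂ ∧
      z₁.length + z₂.length ≤ y.length + w.length := by
  induction y generalizing z₁ z₂ with
  | nil => exact ⟨[], by simp [List.sublist_nil.mp h₁, List.sublist_nil.mp h₂]⟩
  | cons a y ih =>
    cases h₁ with
    | cons _ h₁' =>
      cases h₂ with
      | cons _ h₂' =>
        obtain ⟨w, hw₁, hw₂, hw⟩ := ih h₁' h₂'
        exact ⟨w, hw₁, hw₂, by simp only [List.length_cons]; omega⟩
      | cons_cons _ h₂' =>
        obtain ⟨w, hw₁, hw₂, hw⟩ := ih h₁' h₂'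
        exact ⟨w, hw₁, hw₂.cons a, by simp only [List.length_cons]; omega⟩
    | cons_cons _ h₁' =>
      cases h₂ with
      | cons _ h₂' =>
        obtain ⟨w, hw₁, hw₂, hw⟩ := ih h₁' h₂'
        exact ⟨w, hw₁.cons a, hw₂, by simp only [List.length_cons]; omega⟩
      | cons_cons _ h₂' =>
        obtain ⟨w, hw₁, hw₂, hw⟩ := ih h₁' h₂'
        exact ⟨a :: w, hw₁.cons_cons a, hw₂.cons_cons a,
          by simp only [List.length_cons]; omega⟩

theorem ED_triangle [DecidableEq α] (xs ys zs : List α) :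
    ED xs zs ≤ ED xs ys + ED ys zs := by
  obtain ⟨z₁, hxs, hys₁, hz₁⟩ := exists_sublist_sublist_length_eq_LCSlen xs ys
  obtain ⟨z₂, hys₂, hzs, hz₂⟩ := exists_sublist_sublist_length_eq_LCSlen ys zs
  obtain ⟨w, hw₁, hw₂, hw⟩ := exists_common_sublist_of_sublist hys₁ hys₂
  have hLCS := length_le_LCSlen (hw₁.trans hxs) (hw₂.trans hzs)
  have := ED_add_two_mul_LCSlen xs zs
  have := ED_add_two_mul_LCSlen xs ys
  have := ED_add_two_mul_LCSlen ys zs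
  have := hxs.length_le
  have := hzs.length_le
  omega

section RelativeSuffixDistance

variable {σ : Type*} [DecidableEq σ]

noncomputable def suffixTerm (S T : List σ) (k : ℕ) : ℝ :=
  (ED (S.drop (S.length - (k + 1))) (T.drop (T.length - (k + 1))) : ℝ) / (2 * (k + 1))

theorem RSD_eq_iSup_suffixTerm (S T : List σ) : RSD S T = ⨆ k, suffixTerm S T k := rfl

theorem suffixTerm_nonneg (S T : List σ) (k : ℕ) : 0 ≤ suffixTerm S T k := by
  unfold suffixTerm; positivity

theorem suffixTerm_le_one (S T : List σ) (k : ℕ) : suffixTerm S T k ≤ 1 := by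
  unfold suffixTerm
  rw [div_le_one (by positivity)]
  have hED := ED_le_length_add_length (S.drop (S.length - (k + 1))) (T.drop (T.length - (k + 1)))
  simp only [List.length_drop] at hED
  have : ED (S.drop (S.length - (k + 1))) (T.drop (T.length - (k + 1))) ≤ 2 * (k + 1) := by
    omega
  exact_mod_cast this

theorem suffixTerm_comm (S T : List σ) (k : ℕ) : suffixTerm S T k = suffixTerm T S k := by
  rw [suffixTerm, suffixTerm, ED_comm]

theorem suffixTerm_self (S : List σ) (k : ℕ) : suffixTerm S S k = 0 := by
  simp [suffixTerm, ED_eq_zero_iff.mpr rfl]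

theorem suffixTerm_triangle (S T U : List σ) (k : ℕ) :
    suffixTerm S U k ≤ suffixTerm S T k + suffixTerm T U k := by
  unfold suffixTerm
  rw [← add_div]
  gcongr
  exact_mod_cast ED_triangle _ _ _

theorem eq_of_suffixTerm_eq_zero {S T : List σ} (h : suffixTerm S T (S.length + T.length) = 0) :
    S = T := by
  have hS : S.length - (S.length + T.length + 1) = 0 := by omega
  have hT : T.length - (S.length + T.length + 1) = 0 := by omega
  rw [suffixTerm, hS, hT, List.drop_zero, List.drop_zero, div_eq_zero_iff] at h
  exact ED_eq_zero_iff.mp (by exact_mod_cast h.resolve_right (by positivity))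

theorem bddAbove_range_suffixTerm (S T : List σ) : BddAbove (Set.range (suffixTerm S T)) :=
  ⟨1, by rintro _ ⟨k, rfl⟩; exact suffixTerm_le_one S T k⟩

theorem suffixTerm_le_RSD (S T : List σ) (k : ℕ) : suffixTerm S T k ≤ RSD S T :=
  le_ciSup (bddAbove_range_suffixTerm S T) k

theorem RSD_nonneg (S T : List σ) : 0 ≤ RSD S T :=
  (suffixTerm_nonneg S T 0).trans (suffixTerm_le_RSD S T 0)

theorem RSD_le_one (S T : List σ) : RSD S T ≤ 1 :=
  ciSup_le (suffixTerm_le_one S T)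

theorem RSD_comm (S T : List σ) : RSD S T = RSD T S := by
  simp only [RSD_eq_iSup_suffixTerm, suffixTerm_comm S T]

theorem RSD_eq_zero_iff {S T : List σ} : RSD S T = 0 ↔ S = T := by
  refine ⟨fun h => eq_of_suffixTerm_eq_zero ?_, ?_⟩
  · exact le_antisymm (h ▸ suffixTerm_le_RSD S T _) (suffixTerm_nonneg S T _)
  · rintro rfl
    simp [RSD_eq_iSup_suffixTerm, suffixTerm_self]

theorem RSD_triangle (S T U : List σ) : RSD S U ≤ RSD S T + RSD T U :=
  ciSup_le fun k => (suffixTerm_triangle S T U k).trans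
    (add_le_add (suffixTerm_le_RSD S T k) (suffixTerm_le_RSD T U k))

end RelativeSuffixDistance

/-- RSD is a metric on finite strings, taking values in `[0, 1]`. -/
theorem stmt10 {σ : Type*} [DecidableEq σ] (S T U : List σ) :
    0 ≤ RSD S T ∧ RSD S T ≤ 1 ∧ (RSD S T = 0 ↔ S = T) ∧ RSD S T = RSD T S ∧
      RSD S U ≤ RSD S T + RSD T U :=
  ⟨RSD_nonneg S T, RSD_le_one S T, RSD_eq_zero_iff, RSD_comm S T, RSD_triangle S T U⟩
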